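/- Let X₁,...,X_n be i.i.d. random vectors from F_X and Y₁,...,Y_m i.i.d. from F_Y, samples independent, and let k be a symmetric kernel with E|k(X,X')| + E|k(X,Y)| + E|k(Y,Y')| < ∞. Let h be the two-sample energy kernel h(X₁,X₂,Y₁,Y₂) = (1/2)Σ_{i,j}k(Xᵢ,Yⱼ) − k(X₁,X₂) − k(Y₁,Y₂), and let h_{cd} denote its partial expectations (expectation over all but the first c X-arguments and d Y-arguments). Then the Hoeffding-projection kernel of order (2,2), defined as h^{(2,2)}(X₁,X₂,Y₁,Y₂) = h − Σ h_{21} terms − Σ h_{12} terms + h_{20} + h_{02} + Σ h_{11} terms − Σ h_{10} terms − Σ h_{01} terms + E[h] (with the standard inclusion–exclusion pattern), is identically zero; likewise the order-(2,1) and order-(1,2) projection kernels h^{(2,1)} and h^{(1,2)} are identically zero. -/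

import Mathlib

open MeasureTheory

/-- The two-sample energy kernel
`h(x₁,x₂,y₁,y₂) = (1/2)·Σᵢⱼ k(xᵢ,yⱼ) − k(x₁,x₂) − k(y₁,y₂)`. -/
noncomputable def hker {p : ℕ} (k : (Fin p → ℝ) → (Fin p → ℝ) → ℝ)
    (x₁ x₂ y₁ y₂ : Fin p → ℝ) : ℝ :=
  (1 / 2) * (k x₁ y₁ + k x₁ y₂ + k x₂ y₁ + k x₂ y₂) - k x₁ x₂ - k y₁ y₂

variable {p : ℕ}

/-- Partial expectation `h₂₁(x₁,x₂,y₁) = E_{Y₂}[h(x₁,x₂,y₁,Y₂)]`. -/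
noncomputable def h21 (ν₂ : Measure (Fin p → ℝ)) (k : (Fin p → ℝ) → (Fin p → ℝ) → ℝ)
    (x₁ x₂ y₁ : Fin p → ℝ) : ℝ :=
  ∫ v₂, hker k x₁ x₂ y₁ v₂ ∂ν₂

/-- Partial expectation `h₁₂(x₁,y₁,y₂) = E_{X₂}[h(x₁,X₂,y₁,y₂)]`. -/
noncomputable def h12 (ν₁ : Measure (Fin p → ℝ)) (k : (Fin p → ℝ) → (Fin p → ℝ) → ℝ)
    (x₁ y₁ y₂ : Fin p → ℝ) : ℝ :=
  ∫ u₂, hker k x₁ u₂ y₁ y₂ ∂ν₁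

/-- Partial expectation `h₂₀(x₁,x₂) = E_{Y₁,Y₂}[h(x₁,x₂,Y₁,Y₂)]`. -/
noncomputable def h20 (ν₂ : Measure (Fin p → ℝ)) (k : (Fin p → ℝ) → (Fin p → ℝ) → ℝ)
    (x₁ x₂ : Fin p → ℝ) : ℝ :=
  ∫ v₁, ∫ v₂, hker k x₁ x₂ v₁ v₂ ∂ν₂ ∂ν₂

/-- Partial expectation `h₀₂(y₁,y₂) = E_{X₁,X₂}[h(X₁,X₂,y₁,y₂)]`. -/
noncomputable def h02 (ν₁ : Measure (Fin p → ℝ)) (k : (Fin p → ℝ) → (Fin p → ℝ) → ℝ)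
    (y₁ y₂ : Fin p → ℝ) : ℝ :=
  ∫ u₁, ∫ u₂, hker k u₁ u₂ y₁ y₂ ∂ν₁ ∂ν₁

/-- Partial expectation `h₁₁(x₁,y₁) = E_{X₂,Y₂}[h(x₁,X₂,y₁,Y₂)]`. -/
noncomputable def h11 (ν₁ ν₂ : Measure (Fin p → ℝ)) (k : (Fin p → ℝ) → (Fin p → ℝ) → ℝ)
    (x₁ y₁ : Fin p → ℝ) : ℝ :=
  ∫ u₂, ∫ v₂, hker k x₁ u₂ y₁ v₂ ∂ν₂ ∂ν₁

/-- Partial expectation `h₁₀(x₁) = E_{X₂,Y₁,Y₂}[h(x₁,X₂,Y₁,Y₂)]`. -/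
noncomputable def h10 (ν₁ ν₂ : Measure (Fin p → ℝ)) (k : (Fin p → ℝ) → (Fin p → ℝ) → ℝ)
    (x₁ : Fin p → ℝ) : ℝ :=
  ∫ u₂, ∫ v₁, ∫ v₂, hker k x₁ u₂ v₁ v₂ ∂ν₂ ∂ν₂ ∂ν₁

/-- Partial expectation `h₀₁(y₁) = E_{X₁,X₂,Y₂}[h(X₁,X₂,y₁,Y₂)]`. -/
noncomputable def h01 (ν₁ ν₂ : Measure (Fin p → ℝ)) (k : (Fin p → ℝ) → (Fin p → ℝ) → ℝ)
    (y₁ : Fin p → ℝ) : ℝ :=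
  ∫ u₁, ∫ u₂, ∫ v₂, hker k u₁ u₂ y₁ v₂ ∂ν₂ ∂ν₁ ∂ν₁

/-- Full expectation `E[h(X₁,X₂,Y₁,Y₂)]`. -/
noncomputable def hMean (ν₁ ν₂ : Measure (Fin p → ℝ))
    (k : (Fin p → ℝ) → (Fin p → ℝ) → ℝ) : ℝ :=
  ∫ u₁, ∫ u₂, ∫ v₁, ∫ v₂, hker k u₁ u₂ v₁ v₂ ∂ν₂ ∂ν₂ ∂ν₁ ∂ν₁

/-! Each term of the energy kernel involves only two of its four arguments, so integrating out
arguments one at a time keeps every partial expectation an explicit combination of `k`, the one-sided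
means `x ↦ ∫ k x w ∂νᵢ` and the three constants `∫∫ k ∂νᵢ ∂νⱼ`. Substituting these closed forms,
the inclusion–exclusion sums defining the projections of total order at least three cancel
identically. -/

section EnergyKernel

variable {ν₁ ν₂ : Measure (Fin p → ℝ)} [IsProbabilityMeasure ν₁] [IsProbabilityMeasure ν₂]
  {k : (Fin p → ℝ) → (Fin p → ℝ) → ℝ}

theorem integrable_symm_kernel {μ : Measure (Fin p → ℝ)} (hsymm : ∀ x y, k x y = k y x)
    (hint : ∀ x, Integrable (fun w => k x w) μ) (b : Fin p → ℝ) :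
    Integrable (fun u => k u b) μ := by
  simpa only [hsymm _ b] using hint b

theorem integral_symm_kernel {μ : Measure (Fin p → ℝ)} (hsymm : ∀ x y, k x y = k y x)
    (b : Fin p → ℝ) : ∫ u, k u b ∂μ = ∫ u, k b u ∂μ := by
  simp only [hsymm _ b]

theorem h21_eq (hint2 : ∀ x, Integrable (fun w => k x w) ν₂) (a b c : Fin p → ℝ) :
    h21 ν₂ k a b c = 1 / 2 * (k a c + k b c + (∫ w, k a w ∂ν₂) + ∫ w, k b w ∂ν₂)
      - k a b - ∫ w, k c w ∂ν₂ := by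
  simp (disch := fun_prop) only [h21, hker, integral_add, integral_sub, integral_const_mul,
    integral_const, probReal_univ, one_smul]
  ring

theorem h12_eq (hsymm : ∀ x y, k x y = k y x) (hint1 : ∀ x, Integrable (fun w => k x w) ν₁)
    (a b c : Fin p → ℝ) :
    h12 ν₁ k a b c = 1 / 2 * (k a b + k a c + (∫ w, k b w ∂ν₁) + ∫ w, k c w ∂ν₁)
      - (∫ w, k a w ∂ν₁) - k b c := by
  have hint1_swap := integrable_symm_kernel hsymm hint1
  simp (disch := fun_prop) only [h12, hker, integral_add, integral_sub, integral_const_mul,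
    integral_const, probReal_univ, one_smul, integral_symm_kernel hsymm]

theorem h20_eq (hint2 : ∀ x, Integrable (fun w => k x w) ν₂)
    (hint22 : Integrable (fun q : (Fin p → ℝ) × (Fin p → ℝ) => k q.1 q.2) (ν₂.prod ν₂))
    (a b : Fin p → ℝ) :
    h20 ν₂ k a b = (∫ w, k a w ∂ν₂) + (∫ w, k b w ∂ν₂) - k a b - ∫ v, ∫ w, k v w ∂ν₂ ∂ν₂ := by
  change ∫ v, h21 ν₂ k a b v ∂ν₂ = _
  have hmean₂₂ := hint22.integral_prod_left
  simp (disch := fun_prop) only [h21_eq hint2, integral_add, integral_sub, integral_const_mul,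
    integral_const, probReal_univ, one_smul]
  ring

theorem h02_eq (hsymm : ∀ x y, k x y = k y x) (hint1 : ∀ x, Integrable (fun w => k x w) ν₁)
    (hint11 : Integrable (fun q : (Fin p → ℝ) × (Fin p → ℝ) => k q.1 q.2) (ν₁.prod ν₁))
    (a b : Fin p → ℝ) :
    h02 ν₁ k a b = (∫ w, k a w ∂ν₁) + (∫ w, k b w ∂ν₁) - (∫ v, ∫ w, k v w ∂ν₁ ∂ν₁) - k a b := by
  change ∫ u, h12 ν₁ k u a b ∂ν₁ = _
  have hint1_swap := integrable_symm_kernel hsymm hint1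
  have hmean₁₁ := hint11.integral_prod_left
  simp (disch := fun_prop) only [h12_eq hsymm hint1, integral_add, integral_sub,
    integral_const_mul, integral_const, probReal_univ, one_smul, integral_symm_kernel hsymm]
  ring

theorem h11_eq (hsymm : ∀ x y, k x y = k y x) (hint1 : ∀ x, Integrable (fun w => k x w) ν₁)
    (hint2 : ∀ x, Integrable (fun w => k x w) ν₂)
    (hint12 : Integrable (fun q : (Fin p → ℝ) × (Fin p → ℝ) => k q.1 q.2) (ν₁.prod ν₂))
    (a b : Fin p → ℝ) :
    h11 ν₁ ν₂ k a b = 1 / 2 * (k a b + (∫ w, k a w ∂ν₂) + (∫ w, k b w ∂ν₁)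
      + ∫ u, ∫ w, k u w ∂ν₂ ∂ν₁) - (∫ w, k a w ∂ν₁) - ∫ w, k b w ∂ν₂ := by
  change ∫ u, h21 ν₂ k a u b ∂ν₁ = _
  have hint1_swap := integrable_symm_kernel hsymm hint1
  have hmean₁₂ := hint12.integral_prod_left
  simp (disch := fun_prop) only [h21_eq hint2, integral_add, integral_sub, integral_const_mul,
    integral_const, probReal_univ, one_smul, integral_symm_kernel hsymm]
  ring

theorem h10_eq (hint1 : ∀ x, Integrable (fun w => k x w) ν₁)
    (hint2 : ∀ x, Integrable (fun w => k x w) ν₂)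
    (hint12 : Integrable (fun q : (Fin p → ℝ) × (Fin p → ℝ) => k q.1 q.2) (ν₁.prod ν₂))
    (hint22 : Integrable (fun q : (Fin p → ℝ) × (Fin p → ℝ) => k q.1 q.2) (ν₂.prod ν₂))
    (a : Fin p → ℝ) :
    h10 ν₁ ν₂ k a = (∫ w, k a w ∂ν₂) + (∫ u, ∫ w, k u w ∂ν₂ ∂ν₁) - (∫ w, k a w ∂ν₁)
      - ∫ v, ∫ w, k v w ∂ν₂ ∂ν₂ := by
  change ∫ u, h20 ν₂ k a u ∂ν₁ = _
  have hmean₁₂ := hint12.integral_prod_left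
  simp (disch := fun_prop) only [h20_eq hint2 hint22, integral_add, integral_sub,
    integral_const, probReal_univ, one_smul]

theorem h01_eq (hsymm : ∀ x y, k x y = k y x) (hint1 : ∀ x, Integrable (fun w => k x w) ν₁)
    (hint2 : ∀ x, Integrable (fun w => k x w) ν₂)
    (hint11 : Integrable (fun q : (Fin p → ℝ) × (Fin p → ℝ) => k q.1 q.2) (ν₁.prod ν₁))
    (hint12 : Integrable (fun q : (Fin p → ℝ) × (Fin p → ℝ) => k q.1 q.2) (ν₁.prod ν₂))
    (b : Fin p → ℝ) :
    h01 ν₁ ν₂ k b = (∫ w, k b w ∂ν₁) + (∫ u, ∫ w, k u w ∂ν₂ ∂ν₁) - (∫ v, ∫ w, k v w ∂ν₁ ∂ν₁)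
      - ∫ w, k b w ∂ν₂ := by
  change ∫ u, h11 ν₁ ν₂ k u b ∂ν₁ = _
  have hint1_swap := integrable_symm_kernel hsymm hint1
  have hmean₁₁ := hint11.integral_prod_left
  have hmean₁₂ := hint12.integral_prod_left
  simp (disch := fun_prop) only [h11_eq hsymm hint1 hint2 hint12, integral_add, integral_sub,
    integral_const_mul, integral_const, probReal_univ, one_smul, integral_symm_kernel hsymm]
  ring

theorem hMean_eq (hint1 : ∀ x, Integrable (fun w => k x w) ν₁)
    (hint2 : ∀ x, Integrable (fun w => k x w) ν₂)
    (hint11 : Integrable (fun q : (Fin p → ℝ) × (Fin p → ℝ) => k q.1 q.2) (ν₁.prod ν₁))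
    (hint12 : Integrable (fun q : (Fin p → ℝ) × (Fin p → ℝ) => k q.1 q.2) (ν₁.prod ν₂))
    (hint22 : Integrable (fun q : (Fin p → ℝ) × (Fin p → ℝ) => k q.1 q.2) (ν₂.prod ν₂)) :
    hMean ν₁ ν₂ k = 2 * (∫ u, ∫ w, k u w ∂ν₂ ∂ν₁) - (∫ v, ∫ w, k v w ∂ν₁ ∂ν₁)
      - ∫ v, ∫ w, k v w ∂ν₂ ∂ν₂ := by
  change ∫ u, h10 ν₁ ν₂ k u ∂ν₁ = _
  have hmean₁₁ := hint11.integral_prod_left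
  have hmean₁₂ := hint12.integral_prod_left
  simp (disch := fun_prop) only [h10_eq hint1 hint2 hint12 hint22, integral_add, integral_sub,
    integral_const, probReal_univ, one_smul]
  ring

end EnergyKernel

theorem stmt_19_general (ν₁ ν₂ : Measure (Fin p → ℝ))
    [IsProbabilityMeasure ν₁] [IsProbabilityMeasure ν₂]
    (k : (Fin p → ℝ) → (Fin p → ℝ) → ℝ)
    (hsymm : ∀ x y, k x y = k y x)
    (hint1 : ∀ x, Integrable (fun w => k x w) ν₁)
    (hint2 : ∀ x, Integrable (fun w => k x w) ν₂)
    (hint11 : Integrable (fun q : (Fin p → ℝ) × (Fin p → ℝ) => k q.1 q.2) (ν₁.prod ν₁))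
    (hint12 : Integrable (fun q : (Fin p → ℝ) × (Fin p → ℝ) => k q.1 q.2) (ν₁.prod ν₂))
    (hint22 : Integrable (fun q : (Fin p → ℝ) × (Fin p → ℝ) => k q.1 q.2) (ν₂.prod ν₂)) :
    ∀ x₁ x₂ y₁ y₂ : Fin p → ℝ,
      (hker k x₁ x₂ y₁ y₂
          - h21 ν₂ k x₁ x₂ y₁ - h21 ν₂ k x₁ x₂ y₂
          - h12 ν₁ k x₁ y₁ y₂ - h12 ν₁ k x₂ y₁ y₂
          + h20 ν₂ k x₁ x₂ + h02 ν₁ k y₁ y₂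
          + h11 ν₁ ν₂ k x₁ y₁ + h11 ν₁ ν₂ k x₁ y₂ + h11 ν₁ ν₂ k x₂ y₁ + h11 ν₁ ν₂ k x₂ y₂
          - h10 ν₁ ν₂ k x₁ - h10 ν₁ ν₂ k x₂ - h01 ν₁ ν₂ k y₁ - h01 ν₁ ν₂ k y₂
          + hMean ν₁ ν₂ k = 0) ∧
      (h21 ν₂ k x₁ x₂ y₁ - h20 ν₂ k x₁ x₂
          - h11 ν₁ ν₂ k x₁ y₁ - h11 ν₁ ν₂ k x₂ y₁
          + h10 ν₁ ν₂ k x₁ + h10 ν₁ ν₂ k x₂ + h01 ν₁ ν₂ k y₁ - hMean ν₁ ν₂ k = 0) ∧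
      (h12 ν₁ k x₁ y₁ y₂ - h02 ν₁ k y₁ y₂
          - h11 ν₁ ν₂ k x₁ y₁ - h11 ν₁ ν₂ k x₁ y₂
          + h10 ν₁ ν₂ k x₁ + h01 ν₁ ν₂ k y₁ + h01 ν₁ ν₂ k y₂ - hMean ν₁ ν₂ k = 0) := by
  intro x₁ x₂ y₁ y₂
  simp only [hker, h21_eq hint2, h12_eq hsymm hint1, h20_eq hint2 hint22,
    h02_eq hsymm hint1 hint11, h11_eq hsymm hint1 hint2 hint12, h10_eq hint1 hint2 hint12 hint22,
    h01_eq hsymm hint1 hint2 hint11 hint12, hMean_eq hint1 hint2 hint11 hint12 hint22]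
  refine ⟨?_, ?_, ?_⟩ <;> ring

/-- The Hoeffding-projection kernels of orders `(2,2)`, `(2,1)` and `(1,2)` of the
two-sample energy kernel `h` vanish identically. -/
theorem stmt_19 (ν₁ ν₂ : Measure (Fin p → ℝ))
    [IsProbabilityMeasure ν₁] [IsProbabilityMeasure ν₂]
    (k : (Fin p → ℝ) → (Fin p → ℝ) → ℝ)
    (hk : Measurable fun q : (Fin p → ℝ) × (Fin p → ℝ) => k q.1 q.2)
    (hsymm : ∀ x y, k x y = k y x)
    (hint1 : ∀ x, Integrable (fun w => k x w) ν₁)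
    (hint2 : ∀ x, Integrable (fun w => k x w) ν₂)
    (hint11 : Integrable (fun q : (Fin p → ℝ) × (Fin p → ℝ) => k q.1 q.2) (ν₁.prod ν₁))
    (hint12 : Integrable (fun q : (Fin p → ℝ) × (Fin p → ℝ) => k q.1 q.2) (ν₁.prod ν₂))
    (hint22 : Integrable (fun q : (Fin p → ℝ) × (Fin p → ℝ) => k q.1 q.2) (ν₂.prod ν₂)) :
    ∀ x₁ x₂ y₁ y₂ : Fin p → ℝ,
      (hker k x₁ x₂ y₁ y₂
          - h21 ν₂ k x₁ x₂ y₁ - h21 ν₂ k x₁ x₂ y₂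
          - h12 ν₁ k x₁ y₁ y₂ - h12 ν₁ k x₂ y₁ y₂
          + h20 ν₂ k x₁ x₂ + h02 ν₁ k y₁ y₂
          + h11 ν₁ ν₂ k x₁ y₁ + h11 ν₁ ν₂ k x₁ y₂ + h11 ν₁ ν₂ k x₂ y₁ + h11 ν₁ ν₂ k x₂ y₂
          - h10 ν₁ ν₂ k x₁ - h10 ν₁ ν₂ k x₂ - h01 ν₁ ν₂ k y₁ - h01 ν₁ ν₂ k y₂
          + hMean ν₁ ν₂ k = 0) ∧
      (h21 ν₂ k x₁ x₂ y₁ - h20 ν₂ k x₁ x₂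
          - h11 ν₁ ν₂ k x₁ y₁ - h11 ν₁ ν₂ k x₂ y₁
          + h10 ν₁ ν₂ k x₁ + h10 ν₁ ν₂ k x₂ + h01 ν₁ ν₂ k y₁ - hMean ν₁ ν₂ k = 0) ∧
      (h12 ν₁ k x₁ y₁ y₂ - h02 ν₁ k y₁ y₂
          - h11 ν₁ ν₂ k x₁ y₁ - h11 ν₁ ν₂ k x₁ y₂
          + h10 ν₁ ν₂ k x₁ + h01 ν₁ ν₂ k y₁ + h01 ν₁ ν₂ k y₂ - hMean ν₁ ν₂ k = 0) :=
  stmt_19_general ν₁ ν₂ k hsymm hint1 hint2 hint11 hint12 hint22
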